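/- arXiv:math/0409228 — 2 statements merged into one kernel-verified Lean document; each statement's English description precedes it below -/
import Mathlib

section
/- Let G be a connected s-quadrangular graph of maximum degree at most 4 that is not hamiltonian, and let C₁ ∪ ⋯ ∪ C_m be a 2-factor of G with minimum number m ≥ 2 of cycles. Then every vertex u that has a neighbor outside its own cycle C_i has degree exactly 4 in G. -/
/-!
If `u` has a neighbour `w` on another cycle, then `u` and `σ w` share the neighbour `w`, so by
s-quadrangularity they share a second neighbour `z`. In a 2-factor with the fewest cycles, `z` is
neither cycle-neighbour of `u`: an edge `σ⁻¹ u — σ w` would let `σ * swap w (σ⁻¹ u)` merge the two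
cycles into one, and an edge `σ u — σ w` does the same once the cycle of `w` is reversed. Hence
`σ⁻¹ u`, `σ u`, `w` and `z` are four distinct neighbours of `u`.
-/

/-- The union of all pairwise common neighborhoods of distinct members of `S` in `G`. -/
def commonUnionG {V : Type*} (G : SimpleGraph V) (S : Set V) : Set V :=
  {w | ∃ u ∈ S, ∃ v ∈ S, u ≠ v ∧ G.Adj u w ∧ G.Adj v w}

/-- A graph is s-quadrangular if for every set `S` of at least two vertices in
which every member shares a neighbor with another member, the union of all
pairwise common neighborhoods has size at least `|S|`. -/
def SQuadG {V : Type*} (G : SimpleGraph V) : Prop :=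
  ∀ S : Set V, 2 ≤ S.ncard →
    (∀ u ∈ S, ∃ v ∈ S, v ≠ u ∧ (G.neighborSet u ∩ G.neighborSet v).Nonempty) →
    S.ncard ≤ (commonUnionG G S).ncard

/-- A 2-factor of `G`, encoded as a permutation `σ` that follows edges of `G`
and has all cycles of length at least 3. -/
def IsTwoFactorPerm {V : Type*} (G : SimpleGraph V) (σ : Equiv.Perm V) : Prop :=
  (∀ v, G.Adj v (σ v)) ∧ (∀ v, σ (σ v) ≠ v)

namespace Equiv.Perm

variable {α : Type*}

theorem sameCycle_apply_self (f : Perm α) (x : α) : f.SameCycle x (f x) :=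
  sameCycle_apply_right.2 (.refl _ _)

theorem SameCycle.apply_induction [Finite α] {f : Perm α} {x : α} {P : α → Prop} (hx : P x)
    (hstep : ∀ y, f.SameCycle x y → P y → P (f y)) {y : α} (hxy : f.SameCycle x y) : P y := by
  obtain ⟨n, -, rfl⟩ := hxy.exists_pow_eq'
  induction n with
  | zero => exact hx
  | succ n ih =>
    rw [pow_succ', mul_apply]
    have hxfx : f.SameCycle x ((f ^ n) x) := sameCycle_pow_right.2 (.refl _ _)
    exact hstep _ hxfx (ih hxfx)

theorem SameCycle.of_forall_sameCycle_apply [Finite α] {f g : Perm α}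
    (h : ∀ y, g.SameCycle y (f y)) {p q : α} (hpq : f.SameCycle p q) : g.SameCycle p q :=
  hpq.apply_induction (.refl _ _) fun y _ hy => hy.trans (h y)

variable [Fintype α] [DecidableEq α]

theorem card_cycleType_eq_nat_card_quotient {f : Perm α} (hf : ∀ x, f x ≠ x) :
    Multiset.card f.cycleType = Nat.card (Quotient (SameCycle.setoid f)) := by
  rw [cycleType_def, Multiset.card_map, ← Finset.card_def, ← Nat.card_eq_finsetCard]
  symm
  refine Nat.card_eq_of_bijective
    (Quotient.lift (s := SameCycle.setoid f)
      (fun x => (⟨f.cycleOf x, cycleOf_mem_cycleFactorsFinset_iff.2 (mem_support.2 (hf x))⟩ :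
        f.cycleFactorsFinset)) fun x y hxy => Subtype.ext hxy.cycleOf_eq) ⟨?_, ?_⟩
  · rintro ⟨x⟩ ⟨y⟩ hxy
    have hy : y ∈ (f.cycleOf y).support :=
      mem_support_cycleOf_iff.2 ⟨.refl _ _, mem_support.2 (hf y)⟩
    have hxy' : f.cycleOf x = f.cycleOf y := congrArg Subtype.val hxy
    rw [← hxy'] at hy
    exact Quotient.sound (mem_support_cycleOf_iff.1 hy).1
  · rintro ⟨c, hc⟩
    obtain ⟨a, ha⟩ := (mem_cycleFactorsFinset_iff.1 hc).1.nonempty_support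
    exact ⟨⟦a⟧, Subtype.ext (cycle_is_cycleOf ha hc).symm⟩

theorem card_cycleType_le_of_sameCycle_imp {f g : Perm α} (hf : ∀ x, f x ≠ x)
    (hg : ∀ x, g x ≠ x) (h : ∀ p q, f.SameCycle p q → g.SameCycle p q) :
    Multiset.card g.cycleType ≤ Multiset.card f.cycleType := by
  rw [card_cycleType_eq_nat_card_quotient hf, card_cycleType_eq_nat_card_quotient hg]
  exact Nat.card_le_card_of_surjective (Quot.map id h) (Quot.ind fun x => ⟨Quot.mk _ x, rfl⟩)

theorem card_cycleType_lt_of_sameCycle_imp {f g : Perm α} (hf : ∀ x, f x ≠ x)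
    (hg : ∀ x, g x ≠ x) (h : ∀ p q, f.SameCycle p q → g.SameCycle p q) {x z : α}
    (hfxz : ¬ f.SameCycle x z) (hgxz : g.SameCycle x z) :
    Multiset.card g.cycleType < Multiset.card f.cycleType := by
  refine (card_cycleType_le_of_sameCycle_imp hf hg h).lt_of_ne fun heq => hfxz ?_
  rw [card_cycleType_eq_nat_card_quotient hf, card_cycleType_eq_nat_card_quotient hg] at heq
  have hsurj : Function.Surjective
      (Quot.map id h : Quotient (SameCycle.setoid f) → Quotient (SameCycle.setoid g)) :=
    Quot.ind fun x => ⟨Quot.mk _ x, rfl⟩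
  exact Quotient.exact ((hsurj.bijective_of_nat_card_le heq.ge).injective (Quot.sound hgxz))

section Merge

variable {f : Perm α} {x z : α}

/-- From `x`, the permutation `f * swap x z` jumps to `f z` and then follows `f` around the
cycle of `z` until it reaches `z`. -/
theorem sameCycle_mul_swap (hxz : ¬ f.SameCycle x z) : (f * swap x z).SameCycle x z := by
  have hgx : (f * swap x z) x = f z := by simp [mul_apply]
  have key : ∀ y, f.SameCycle z y → (f * swap x z).SameCycle x (f y) := fun y hy =>
    hy.apply_induction (P := fun y => (f * swap x z).SameCycle x (f y))
      (hgx ▸ sameCycle_apply_self _ x) fun y hzy ih => by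
      by_cases hfy : f y = z
      · rw [hfy, ← hgx]
        exact sameCycle_apply_self _ x
      · have hfyx : f y ≠ x := fun h => hxz (h ▸ (hzy.trans (sameCycle_apply_self f y))).symm
        have hg : (f * swap x z) (f y) = f (f y) := by
          rw [mul_apply, swap_apply_of_ne_of_ne hfyx hfy]
        exact hg ▸ ih.trans (sameCycle_apply_self _ _)
  simpa using key (f⁻¹ z) (sameCycle_symm_apply_right.2 (.refl _ _))

theorem SameCycle.mul_swap (hxz : ¬ f.SameCycle x z) {p q : α} (hpq : f.SameCycle p q) :
    (f * swap x z).SameCycle p q := by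
  refine hpq.of_forall_sameCycle_apply fun y => ?_
  have hg := sameCycle_mul_swap hxz
  rcases eq_or_ne y x with rfl | hyx
  · simpa [mul_apply] using hg.trans (sameCycle_apply_self _ z)
  rcases eq_or_ne y z with rfl | hyz
  · simpa [mul_apply] using hg.symm.trans (sameCycle_apply_self _ x)
  have hgy : (f * swap x z) y = f y := by rw [mul_apply, swap_apply_of_ne_of_ne hyx hyz]
  exact hgy ▸ sameCycle_apply_self _ y

theorem card_cycleType_mul_swap_lt (hf : ∀ y, f y ≠ y) (hxz : ¬ f.SameCycle x z) :
    Multiset.card (f * swap x z).cycleType < Multiset.card f.cycleType := by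
  have hg : ∀ y, (f * swap x z) y ≠ y := by
    intro y
    rw [mul_apply, swap_apply_def]
    split_ifs with hyx hyz
    · exact fun h => hxz (hyx ▸ h ▸ sameCycle_apply_self f z).symm
    · exact fun h => hxz (hyz ▸ h ▸ sameCycle_apply_self f x)
    · exact hf y
  exact card_cycleType_lt_of_sameCycle_imp hf hg (fun _ _ => SameCycle.mul_swap hxz) hxz
    (sameCycle_mul_swap hxz)

end Merge

/-- `c = σ.cycleOf w` commutes with `σ` and agrees with it on its support, so `σ * c⁻¹ ^ 2` is
`σ⁻¹` on the cycle of `w` and `σ` elsewhere. -/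
def reverseCycle (σ : Perm α) (w : α) : Perm α := σ * (σ.cycleOf w)⁻¹ ^ 2

theorem reverseCycle_apply (σ : Perm α) (w v : α) :
    σ.reverseCycle w v = if σ.SameCycle w v then σ⁻¹ v else σ v := by
  simp only [reverseCycle, sq, mul_apply, cycleOf_inv, cycleOf_apply, sameCycle_inv]
  split_ifs <;> simp_all [sameCycle_symm_apply_right]

theorem sameCycle_reverseCycle_iff (σ : Perm α) (w : α) {p q : α} :
    (σ.reverseCycle w).SameCycle p q ↔ σ.SameCycle p q := by
  refine ⟨SameCycle.of_forall_sameCycle_apply fun y => ?_,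
    SameCycle.of_forall_sameCycle_apply fun y => ?_⟩
  · rw [reverseCycle_apply]
    split_ifs
    · exact sameCycle_symm_apply_right.2 (.refl _ _)
    · exact sameCycle_apply_self σ y
  · by_cases hy : σ.SameCycle w y
    · have hrev : σ.reverseCycle w (σ y) = y := by
        rw [reverseCycle_apply, if_pos (sameCycle_apply_right.2 hy)]
        simp
      exact (hrev ▸ sameCycle_apply_self _ (σ y)).symm
    · have hrev : σ.reverseCycle w y = σ y := by rw [reverseCycle_apply, if_neg hy]
      exact hrev ▸ sameCycle_apply_self _ y

end Equiv.Perm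

open Equiv Equiv.Perm

section TwoFactor

variable {V : Type*} {G : SimpleGraph V} {σ : Perm V}

theorem IsTwoFactorPerm.apply_ne (hσ : IsTwoFactorPerm G σ) (v : V) : σ v ≠ v :=
  fun h => G.irrefl (h ▸ hσ.1 v)

theorem IsTwoFactorPerm.mul_swap [DecidableEq V] (hσ : IsTwoFactorPerm G σ) {x z : V}
    (hxz : ¬ σ.SameCycle x z) (hx : G.Adj x (σ z)) (hz : G.Adj z (σ x)) :
    IsTwoFactorPerm G (σ * swap x z) := by
  refine ⟨fun v => ?_, fun v h => ?_⟩
  · rw [mul_apply, swap_apply_def]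
    split_ifs with hvx hvz
    · exact hvx ▸ hx
    · exact hvz ▸ hz
    · exact hσ.1 v
  · -- each case either closes a σ-cycle of length at most 2 or puts `x` and `z` on one σ-cycle
    simp only [mul_apply, swap_apply_def] at h
    split_ifs at h <;>
      grind [SameCycle.trans, SameCycle.symm, sameCycle_apply_self, hσ.apply_ne, hσ.2]

variable [Fintype V] [DecidableEq V]

theorem IsTwoFactorPerm.reverseCycle (hσ : IsTwoFactorPerm G σ) (w : V) :
    IsTwoFactorPerm G (σ.reverseCycle w) := by
  refine ⟨fun v => ?_, fun v => ?_⟩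
  · rw [reverseCycle_apply]
    split_ifs
    · simpa using (hσ.1 (σ⁻¹ v)).symm
    · exact hσ.1 v
  · by_cases hv : σ.SameCycle w v
    · have hrev : σ.reverseCycle w v = σ⁻¹ v := by rw [reverseCycle_apply, if_pos hv]
      have hv' : σ.SameCycle w (σ⁻¹ v) := sameCycle_symm_apply_right.2 hv
      rw [hrev, reverseCycle_apply, if_pos hv']
      exact fun h => hσ.2 (σ⁻¹ (σ⁻¹ v)) (by simpa using h.symm)
    · have hrev : σ.reverseCycle w v = σ v := by rw [reverseCycle_apply, if_neg hv]
      rw [hrev, reverseCycle_apply, if_neg (mt sameCycle_apply_right.1 hv)]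
      exact hσ.2 v

variable (G) in
def IsMinTwoFactorPerm (σ : Perm V) : Prop :=
  IsTwoFactorPerm G σ ∧
    ∀ τ : Perm V, IsTwoFactorPerm G τ → Multiset.card σ.cycleType ≤ Multiset.card τ.cycleType

theorem IsMinTwoFactorPerm.reverseCycle (hσ : IsMinTwoFactorPerm G σ) (w : V) :
    IsMinTwoFactorPerm G (σ.reverseCycle w) := by
  have hrev := hσ.1.reverseCycle w
  refine ⟨hrev, fun τ hτ => le_trans ?_ (hσ.2 τ hτ)⟩
  exact card_cycleType_le_of_sameCycle_imp hσ.1.apply_ne hrev.apply_ne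
    fun _ _ => (sameCycle_reverseCycle_iff σ w).2

theorem IsMinTwoFactorPerm.not_adj_inv_apply_apply (hσ : IsMinTwoFactorPerm G σ) {u v : V}
    (huv : ¬ σ.SameCycle u v) (hadj : G.Adj u v) : ¬ G.Adj (σ⁻¹ u) (σ v) := fun h => by
  have hvu : ¬ σ.SameCycle v (σ⁻¹ u) :=
    fun h' => huv (sameCycle_symm_apply_right.1 h').symm
  have hmerge := hσ.1.mul_swap hvu (by simpa using hadj.symm) h
  exact (card_cycleType_mul_swap_lt hσ.1.apply_ne hvu).not_ge (hσ.2 _ hmerge)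

theorem IsMinTwoFactorPerm.not_adj_apply_apply (hσ : IsMinTwoFactorPerm G σ) {u v : V}
    (huv : ¬ σ.SameCycle u v) (hadj : G.Adj u v) : ¬ G.Adj (σ u) (σ v) := by
  have hv : (σ.reverseCycle v)⁻¹ v = σ v := by
    rw [inv_eq_iff_eq, reverseCycle_apply, if_pos (sameCycle_apply_self σ v)]
    simp
  have hu : σ.reverseCycle v u = σ u := by
    rw [reverseCycle_apply, if_neg fun h => huv h.symm]
  have hvu : ¬ (σ.reverseCycle v).SameCycle v u :=
    fun h => huv ((sameCycle_reverseCycle_iff σ v).1 h).symm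
  have := (hσ.reverseCycle v).not_adj_inv_apply_apply hvu hadj.symm
  rw [hv, hu] at this
  exact fun h => this h.symm

end TwoFactor

theorem SQuadG.exists_adj_adj_ne {V : Type*} {G : SimpleGraph V} (hsq : SQuadG G) {u d w : V}
    (hud : u ≠ d) (hu : G.Adj u w) (hd : G.Adj d w) : ∃ z ≠ w, G.Adj u z ∧ G.Adj d z := by
  have hpair : ({u, d} : Set V).ncard = 2 := Set.ncard_pair hud
  have hcommon := hsq {u, d} hpair.ge <| by
    rintro p (rfl | rfl)
    · exact ⟨d, by simp, hud.symm, w, hu, hd⟩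
    · exact ⟨u, by simp, hud, w, hd, hu⟩
  obtain ⟨z, ⟨p, hp, q, hq, hpq, hpz, hqz⟩, hzw⟩ :=
    Set.exists_ne_of_one_lt_ncard (s := commonUnionG G {u, d}) (by omega) w
  refine ⟨z, hzw, ?_⟩
  rcases hp with rfl | rfl <;> rcases hq with rfl | rfl
  all_goals first | exact absurd rfl hpq | exact ⟨hpz, hqz⟩ | exact ⟨hqz, hpz⟩

theorem min_two_factor_outside_neighbor_degree_four_general {V : Type*} [Fintype V]
    [DecidableEq V] (G : SimpleGraph V) (hsq : SQuadG G)
    (hdeg : ∀ v : V, (G.neighborSet v).ncard ≤ 4)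
    (σ : Equiv.Perm V) (hσ : IsTwoFactorPerm G σ)
    (hmin : ∀ τ : Equiv.Perm V, IsTwoFactorPerm G τ →
      Multiset.card σ.cycleType ≤ Multiset.card τ.cycleType) :
    ∀ u : V, (∃ w : V, ¬ σ.SameCycle u w ∧ G.Adj u w) →
      (G.neighborSet u).ncard = 4 := by
  rintro u ⟨w, huw, hadj⟩
  have hσmin : IsMinTwoFactorPerm G σ := ⟨hσ, hmin⟩
  have hud : u ≠ σ w := fun h => huw (h ▸ sameCycle_apply_self σ w).symm
  obtain ⟨z, hzw, huz, hdz⟩ := hsq.exists_adj_adj_ne hud hadj (hσ.1 w).symm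
  have hza : σ⁻¹ u ≠ z := fun h => hσmin.not_adj_inv_apply_apply huw hadj (h ▸ hdz.symm)
  have hzb : σ u ≠ z := fun h => hσmin.not_adj_apply_apply huw hadj (h ▸ hdz.symm)
  have hab : σ⁻¹ u ≠ σ u := fun h => hσ.2 (σ⁻¹ u) (by simp [← h])
  have haw : σ⁻¹ u ≠ w := fun h => huw (h ▸ sameCycle_symm_apply_right.2 (.refl _ _))
  have hbw : σ u ≠ w := fun h => huw (h ▸ sameCycle_apply_self σ u)
  refine le_antisymm (hdeg u) ?_
  calc 4 = ({σ⁻¹ u, σ u, w, z} : Set V).ncard :=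
        (Set.ncard_eq_four.2 ⟨_, _, _, _, hab, haw, hza, hbw, hzb, hzw.symm, rfl⟩).symm
    _ ≤ (G.neighborSet u).ncard := by
        refine Set.ncard_le_ncard ?_ (Set.toFinite _)
        rintro _ (rfl | rfl | rfl | rfl)
        · simpa using (hσ.1 (σ⁻¹ u)).symm
        · exact hσ.1 u
        · exact hadj
        · exact huz

/-- If `G` is a connected non-hamiltonian s-quadrangular graph of maximum
degree at most 4 and `σ` is a 2-factor of `G` with the minimum number `m ≥ 2`
of cycles, then every vertex having a neighbor outside its own cycle has
degree exactly 4. -/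
theorem min_two_factor_outside_neighbor_degree_four {V : Type*} [Fintype V]
    [DecidableEq V] (G : SimpleGraph V) (hconn : G.Connected) (hsq : SQuadG G)
    (hdeg : ∀ v : V, (G.neighborSet v).ncard ≤ 4) (hham : ¬ G.IsHamiltonian)
    (σ : Equiv.Perm V) (hσ : IsTwoFactorPerm G σ)
    (hmin : ∀ τ : Equiv.Perm V, IsTwoFactorPerm G τ →
      Multiset.card σ.cycleType ≤ Multiset.card τ.cycleType)
    (hm : 2 ≤ Multiset.card σ.cycleType) :
    ∀ u : V, (∃ w : V, ¬ σ.SameCycle u w ∧ G.Adj u w) →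
      (G.neighborSet u).ncard = 4 :=
  min_two_factor_outside_neighbor_degree_four_general G hsq hdeg σ hσ hmin
end

section
/- In the proof setting of the directed degree-3 theorem: let D be a strong s-quadrangular digraph with all out- and in-degrees at most 3 and a minimum cycle factor C₁ ∪ ⋯ ∪ C_t with t ≥ 2, chosen with C₁ as short as possible. If x ∈ C₁ dominates y ∈ C₂, then x has out-degree exactly 3 and there is a vertex z ∉ {x⁺, y} dominated by both x and y⁻ (where v⁺, v⁻ denote the successor and predecessor of v on its cycle). -/
/-!
Let `b = y⁻`. If `b` dominated `x⁺`, replacing the arcs `x → x⁺`, `b → y` of the cycle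
factor by `x → y`, `b → x⁺` would merge `C₁` and `C₂` into one cycle, against the minimality
of `t`. Since `x` and `b` both dominate `y`, `{x, b}` is a q⁺-set, so s-quadrangularity gives
a second common out-neighbour `z ≠ y`, and `z ≠ x⁺` by the first point. Thus `y`, `x⁺`, `z`
are three distinct out-neighbours of `x`.
-/

/-- Out-neighborhood of `x` in the digraph with arc relation `A`. -/
def outN {V : Type*} (A : V → V → Prop) (x : V) : Set V := {y | A x y}

/-- In-neighborhood of `x` in the digraph with arc relation `A`. -/
def inN {V : Type*} (A : V → V → Prop) (x : V) : Set V := {y | A y x}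

/-- `S` is a q-set for the neighborhood function `N`: it has at least two
vertices and every member shares an `N`-neighbor with another member. -/
def IsQSet {V : Type*} (N : V → Set V) (S : Set V) : Prop :=
  2 ≤ S.ncard ∧ ∀ u ∈ S, ∃ v ∈ S, v ≠ u ∧ (N u ∩ N v).Nonempty

/-- The union of all pairwise common `N`-neighborhoods of distinct members of `S`. -/
def commonUnion {V : Type*} (N : V → Set V) (S : Set V) : Set V :=
  {w | ∃ u ∈ S, ∃ v ∈ S, u ≠ v ∧ w ∈ N u ∧ w ∈ N v}

/-- A digraph is s-quadrangular if every q⁺-set and every q⁻-set `S` has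
pairwise common neighborhood union of size at least `|S|`. -/
def SQuadD {V : Type*} (A : V → V → Prop) : Prop :=
  (∀ S : Set V, IsQSet (outN A) S → S.ncard ≤ (commonUnion (outN A) S).ncard) ∧
  (∀ S : Set V, IsQSet (inN A) S → S.ncard ≤ (commonUnion (inN A) S).ncard)

/-- A digraph is strong if there is a directed path between every ordered pair. -/
def StrongD {V : Type*} (A : V → V → Prop) : Prop :=
  ∀ x y : V, Relation.ReflTransGen A x y

/-- A cycle factor of a loopless digraph, encoded as a fixed-point-free
permutation following the arcs: its cycles are the vertex-disjoint directed
cycles covering all vertices. -/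
def IsCycleFactor {V : Type*} (A : V → V → Prop) (σ : Equiv.Perm V) : Prop :=
  ∀ v, A v (σ v) ∧ σ v ≠ v

namespace Equiv.Perm

variable {α : Type*}

theorem sameCycle_apply_of_eq_on_sameCycle [Finite α] {f g : Perm α} {x v : α}
    (hfg : ∀ w, g.SameCycle x w → w ≠ x → f w = g w) (hv : g.SameCycle x v) :
    f.SameCycle (g x) v := by
  obtain ⟨i, hi, -, rfl⟩ := hv.exists_pow_eq''
  clear hv
  induction i, hi using Nat.le_induction with
  | base => simpa using SameCycle.refl f (g x)
  | succ n _ ih =>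
    rw [pow_succ', mul_apply]
    by_cases hn : (g ^ n) x = x
    · rw [hn]
    · rw [← hfg _ (sameCycle_pow_right.mpr (SameCycle.refl g x)) hn]
      exact ih.trans (sameCycle_apply_right.mpr (SameCycle.refl f _))

variable [Fintype α] [DecidableEq α]

theorem isCycle_cycleOf_mul_cycleOf_mul_swap {σ : Perm α} {a b : α} (ha : σ a ≠ a)
    (hab : ¬σ.SameCycle a b) :
    (σ.cycleOf b * σ.cycleOf a * swap a b).IsCycle := by
  set m := σ.cycleOf b * σ.cycleOf a * swap a b
  have hba : ¬σ.SameCycle b a := fun h => hab h.symm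
  have hm_a : m a = σ b := by
    simp [m, cycleOf_apply_of_not_sameCycle hab, SameCycle.cycleOf_apply (SameCycle.refl σ b)]
  have hm_b : m b = σ a := by
    simp [m, SameCycle.cycleOf_apply (SameCycle.refl σ a),
      cycleOf_apply_of_not_sameCycle (mt sameCycle_apply_right.mp hba)]
  have hm_of_a : ∀ w, σ.SameCycle a w → w ≠ a → m w = σ w := by
    intro w hw hwa
    have hwb : w ≠ b := by rintro rfl; exact hab hw
    have hbw : ¬σ.SameCycle b (σ w) := fun h => hab (hw.trans (sameCycle_apply_right.mp h).symm)
    simp [m, swap_apply_of_ne_of_ne hwa hwb, hw.cycleOf_apply, cycleOf_apply_of_not_sameCycle hbw]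
  have hm_of_b : ∀ w, σ.SameCycle b w → w ≠ b → m w = σ w := by
    intro w hw hwb
    have hwa : w ≠ a := by rintro rfl; exact hba hw
    have haw : ¬σ.SameCycle a w := fun h => hab (h.trans hw.symm)
    simp [m, swap_apply_of_ne_of_ne hwa hwb, hw.cycleOf_apply, cycleOf_apply_of_not_sameCycle haw]
  have hm_fix : ∀ w, ¬σ.SameCycle a w → ¬σ.SameCycle b w → m w = w := by
    intro w haw hbw
    have hwa : w ≠ a := by rintro rfl; exact haw (SameCycle.refl σ w)
    have hwb : w ≠ b := by rintro rfl; exact hbw (SameCycle.refl σ w)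
    simp [m, swap_apply_of_ne_of_ne hwa hwb, cycleOf_apply_of_not_sameCycle haw,
      cycleOf_apply_of_not_sameCycle hbw]
  -- `m` runs through the cycle of `b` from `m a = σ b` back to `b`, then through that of `a`
  have hm_cycle_b : ∀ w, σ.SameCycle b w → m.SameCycle a w := fun w hw =>
    (sameCycle_apply_right.mpr (SameCycle.refl m a)).trans
      (hm_a ▸ sameCycle_apply_of_eq_on_sameCycle hm_of_b hw)
  have hm_cycle_a : ∀ w, σ.SameCycle a w → m.SameCycle a w := fun w hw =>
    (hm_cycle_b b (SameCycle.refl σ b)).trans <|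
      (sameCycle_apply_right.mpr (SameCycle.refl m b)).trans
        (hm_b ▸ sameCycle_apply_of_eq_on_sameCycle hm_of_a hw)
  refine ⟨a, fun h => hba ⟨1, by simpa [hm_a] using h⟩, fun w hw => ?_⟩
  by_cases haw : σ.SameCycle a w
  · exact hm_cycle_a w haw
  by_cases hbw : σ.SameCycle b w
  · exact hm_cycle_b w hbw
  exact absurd (hm_fix w haw hbw) hw

/-- The two cycles through `a` and `b` merge into one. -/
theorem card_cycleType_mul_swap_lt_s13 {σ : Perm α} {a b : α} (ha : σ a ≠ a) (hb : σ b ≠ b)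
    (hab : ¬σ.SameCycle a b) :
    Multiset.card (σ * swap a b).cycleType < Multiset.card σ.cycleType := by
  set c := σ.cycleOf a
  set d := σ.cycleOf b
  set ρ := σ * c⁻¹ * d⁻¹
  have hc : c ∈ σ.cycleFactorsFinset :=
    cycleOf_mem_cycleFactorsFinset_iff.mpr (mem_support.mpr ha)
  have hd : d ∈ σ.cycleFactorsFinset :=
    cycleOf_mem_cycleFactorsFinset_iff.mpr (mem_support.mpr hb)
  have hca : c a ≠ a := by rwa [cycleOf_apply_self]
  have hdb : d b ≠ b := by rwa [cycleOf_apply_self]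
  have hcd : c ≠ d := fun h =>
    hca (h ▸ cycleOf_apply_of_not_sameCycle fun h' => hab h'.symm)
  have hd' : d ∈ (σ * c⁻¹).cycleFactorsFinset := by
    rw [cycleFactorsFinset_mul_inv_mem_eq_sdiff hc]
    simpa [hd] using hcd.symm
  have hdc : Disjoint d c := (cycleFactorsFinset_pairwise_disjoint σ hc hd hcd).symm
  have hρd : Disjoint ρ d := disjoint_mul_inv_of_mem_cycleFactorsFinset hd'
  have hρc : Disjoint ρ c := (disjoint_mul_inv_of_mem_cycleFactorsFinset hc).mul_left hdc.inv_left
  have hρswap : Disjoint ρ (swap a b) := by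
    intro v
    rcases eq_or_ne v a with rfl | hva
    · exact Or.inl ((hρc v).resolve_right hca)
    rcases eq_or_ne v b with rfl | hvb
    · exact Or.inl ((hρd v).resolve_right hdb)
    exact Or.inr (swap_apply_of_ne_of_ne hva hvb)
  have hσ : σ = ρ * d * c := by simp only [ρ]; group
  have hτ : σ * swap a b = ρ * (d * c * swap a b) := by rw [hσ]; simp only [mul_assoc]
  have hσ_card : Multiset.card σ.cycleType = Multiset.card ρ.cycleType + 2 := by
    rw [hσ, (hρc.mul_left hdc).cycleType_mul, hρd.cycleType_mul,
      (isCycle_cycleOf σ hb).cycleType, (isCycle_cycleOf σ ha).cycleType]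
    simp
  have hτ_card : Multiset.card (σ * swap a b).cycleType = Multiset.card ρ.cycleType + 1 := by
    rw [hτ, ((hρd.mul_right hρc).mul_right hρswap).cycleType_mul,
      (isCycle_cycleOf_mul_cycleOf_mul_swap ha hab).cycleType]
    simp
  omega

end Equiv.Perm

section Digraph

variable {V : Type*}

theorem isQSet_pair {N : V → Set V} {u v : V} (huv : u ≠ v) (h : (N u ∩ N v).Nonempty) :
    IsQSet N {u, v} := by
  refine ⟨(Set.ncard_pair huv).ge, ?_⟩
  rintro w (rfl | rfl)
  · exact ⟨v, by simp, huv.symm, h⟩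
  · exact ⟨u, by simp, huv, Set.inter_comm (N u) (N w) ▸ h⟩

theorem commonUnion_pair {N : V → Set V} {u v : V} (huv : u ≠ v) :
    commonUnion N {u, v} = N u ∩ N v := by
  ext w
  constructor
  · rintro ⟨p, hp, q, hq, hpq, hwp, hwq⟩
    rcases hp with rfl | rfl <;> rcases hq with rfl | rfl
    exacts [absurd rfl hpq, ⟨hwp, hwq⟩, ⟨hwq, hwp⟩, absurd rfl hpq]
  · rintro ⟨hwu, hwv⟩
    exact ⟨u, by simp, v, by simp, huv, hwu, hwv⟩

variable {A : V → V → Prop}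

theorem SQuadD.two_le_ncard_outN_inter (hsq : SQuadD A) {u v : V} (huv : u ≠ v)
    (h : (outN A u ∩ outN A v).Nonempty) : 2 ≤ (outN A u ∩ outN A v).ncard := by
  simpa [commonUnion_pair huv, Set.ncard_pair huv] using hsq.1 _ (isQSet_pair huv h)

theorem IsCycleFactor.mul_swap {σ : Equiv.Perm V} [DecidableEq V] (hσ : IsCycleFactor A σ)
    {u v : V} (huv : ¬σ.SameCycle u v) (hu : A u (σ v)) (hv : A v (σ u)) :
    IsCycleFactor A (σ * Equiv.swap u v) := by
  intro w
  rcases eq_or_ne w u with rfl | hwu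
  · exact ⟨by simpa using hu, fun h => huv (.symm ⟨1, by simpa using h⟩)⟩
  rcases eq_or_ne w v with rfl | hwv
  · exact ⟨by simpa using hv, fun h => huv ⟨1, by simpa using h⟩⟩
  simpa [Equiv.swap_apply_of_ne_of_ne hwu hwv] using hσ w

/-- Otherwise swapping the successors of `u` and `v` would merge their two cycles. -/
theorem IsCycleFactor.not_adj_succ_of_min [Fintype V] [DecidableEq V] {σ : Equiv.Perm V}
    (hσ : IsCycleFactor A σ)
    (hmin : ∀ τ : Equiv.Perm V, IsCycleFactor A τ →
      Multiset.card σ.cycleType ≤ Multiset.card τ.cycleType)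
    {u v : V} (huv : ¬σ.SameCycle u v) (hu : A u (σ v)) : ¬A v (σ u) := fun hv =>
  (hmin _ (hσ.mul_swap huv hu hv)).not_gt
    (Equiv.Perm.card_cycleType_mul_swap_lt_s13 (hσ u).2 (hσ v).2 huv)

end Digraph

theorem squad_deg3_dominating_structure_general {V : Type*} [Fintype V] [DecidableEq V]
    (A : V → V → Prop) (hsq : SQuadD A)
    (hdeg : ∀ v, (outN A v).ncard ≤ 3 ∧ (inN A v).ncard ≤ 3)
    (σ : Equiv.Perm V) (hσ : IsCycleFactor A σ)
    (hmin : ∀ τ : Equiv.Perm V, IsCycleFactor A τ →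
      Multiset.card σ.cycleType ≤ Multiset.card τ.cycleType)
    (x y : V) (hxy : A x y) (hdiff : ¬ σ.SameCycle x y) :
    (outN A x).ncard = 3 ∧
      ∃ z : V, z ≠ σ x ∧ z ≠ y ∧ A x z ∧ A (σ⁻¹ y) z := by
  set b := σ⁻¹ y
  have hby : σ b = y := σ.apply_symm_apply y
  have hxb : ¬σ.SameCycle x b := fun h => hdiff (Equiv.Perm.sameCycle_symm_apply_right.mp h)
  have hxb_ne : x ≠ b := fun h => hxb (h ▸ Equiv.Perm.SameCycle.refl σ x)
  have hbx : ¬A b (σ x) := hσ.not_adj_succ_of_min hmin hxb (hby ▸ hxy)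
  have hb_y : A b y := hby ▸ (hσ b).1
  obtain ⟨z, ⟨hxz, hbz⟩, hzy⟩ := Set.exists_ne_of_one_lt_ncard
    (hsq.two_le_ncard_outN_inter hxb_ne ⟨y, hxy, hb_y⟩) y
  have hzσx : z ≠ σ x := fun h => hbx (h ▸ hbz)
  have hyσx : y ≠ σ x := fun h => hdiff ⟨1, by simp [h]⟩
  refine ⟨le_antisymm (hdeg x).1 ?_, z, hzσx, hzy, hxz, hbz⟩
  calc 3 = ({y, σ x, z} : Set V).ncard :=
        (Set.ncard_eq_three.mpr ⟨y, σ x, z, hyσx, hzy.symm, hzσx.symm, rfl⟩).symm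
    _ ≤ (outN A x).ncard :=
        Set.ncard_le_ncard (by rintro w (rfl | rfl | rfl); exacts [hxy, (hσ x).1, hxz])
          (Set.toFinite _)

/-- In a strong s-quadrangular digraph with all out- and in-degrees at most 3,
take a cycle factor `σ` with the minimum number `t ≥ 2` of cycles, chosen so
that no minimum cycle factor has a cycle shorter than the cycle `C₁` of `x`.
If `x` dominates a vertex `y` on a different cycle, then `x` has out-degree
exactly 3 and some vertex `z ∉ {x⁺, y}` is dominated by both `x` and `y⁻`. -/
theorem squad_deg3_dominating_structure {V : Type*} [Fintype V] [DecidableEq V]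
    (A : V → V → Prop) (hloopless : ∀ v, ¬ A v v)
    (hstrong : StrongD A) (hsq : SQuadD A)
    (hdeg : ∀ v, (outN A v).ncard ≤ 3 ∧ (inN A v).ncard ≤ 3)
    (σ : Equiv.Perm V) (hσ : IsCycleFactor A σ)
    (hmin : ∀ τ : Equiv.Perm V, IsCycleFactor A τ →
      Multiset.card σ.cycleType ≤ Multiset.card τ.cycleType)
    (ht : 2 ≤ Multiset.card σ.cycleType)
    (x y : V) (hxy : A x y) (hdiff : ¬ σ.SameCycle x y)
    (hshort : ∀ τ : Equiv.Perm V, IsCycleFactor A τ →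
      Multiset.card τ.cycleType = Multiset.card σ.cycleType →
      ∀ w : V, (σ.cycleOf x).support.card ≤ (τ.cycleOf w).support.card) :
    (outN A x).ncard = 3 ∧
      ∃ z : V, z ≠ σ x ∧ z ≠ y ∧ A x z ∧ A (σ⁻¹ y) z :=
  squad_deg3_dominating_structure_general A hsq hdeg σ hσ hmin x y hxy hdiff
end
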